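/- The series ∑_{k=2}^∞ log((4k²-1)²/(16k²(k²-1))) converges and equals log(128/(9π²)). -/

import Mathlib

/-!
Writing `m = k + 2`, the `k`-th factor `(4m² - 1)² / (16 m² (m² - 1))` is
`m² / ((m - 1)(m + 1))` divided by the square of the Wallis factor `4m² / (4m² - 1)`.
The first factors telescope to `2`, and by Wallis' product the Wallis factors from `m = 2` on
multiply to `(π / 2) / (4 / 3)`; hence the factors multiply to `128 / (9π²)`, and since every
factor is at least `1`, the series of their logarithms sums to the logarithm of that product.
-/

open Real Filter Finset Topology

theorem hasSum_log_of_tendsto_prod {f : ℕ → ℝ} {a : ℝ} (hf : ∀ k, 1 ≤ f k)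
    (h : Tendsto (fun n ↦ ∏ k ∈ range n, f k) atTop (𝓝 a)) :
    HasSum (fun k ↦ log (f k)) (log a) := by
  have ha : 1 ≤ a := ge_of_tendsto' h fun n ↦ one_le_prod fun k _ ↦ hf k
  rw [hasSum_iff_tendsto_nat_of_nonneg fun k ↦ log_nonneg (hf k)]
  simp_rw [← log_prod fun k _ ↦ (zero_lt_one.trans_le (hf k)).ne']
  exact ((continuousAt_log (by positivity)).tendsto).comp h

noncomputable def wallisFactor (i : ℕ) : ℝ :=
  (2 * i + 2) / (2 * i + 1) * ((2 * i + 2) / (2 * i + 3))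

theorem tendsto_prod_wallisFactor_succ :
    Tendsto (fun n ↦ ∏ i ∈ range n, wallisFactor (i + 1)) atTop (𝓝 (3 * π / 8)) := by
  have hW : Tendsto (fun n ↦ ∏ i ∈ range (n + 1), wallisFactor i) atTop (𝓝 (π / 2)) :=
    tendsto_prod_pi_div_two.comp (tendsto_add_atTop_nat 1)
  convert hW.div_const (wallisFactor 0) using 1
  · ext n
    rw [prod_range_succ', mul_div_cancel_right₀ _ (by norm_num [wallisFactor])]
  · norm_num [wallisFactor]
    ring

theorem prod_range_sq_div_pred_mul_succ (N : ℕ) :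
    ∏ k ∈ range N, ((k : ℝ) + 2) ^ 2 / (((k : ℝ) + 1) * ((k : ℝ) + 3)) =
      2 * ((N : ℝ) + 1) / (N + 2) := by
  induction N with
  | zero => norm_num
  | succ n ih =>
    rw [prod_range_succ, ih]
    push_cast
    field_simp
    ring

theorem tendsto_prod_range_sq_div_pred_mul_succ :
    Tendsto (fun N ↦ ∏ k ∈ range N, ((k : ℝ) + 2) ^ 2 / (((k : ℝ) + 1) * ((k : ℝ) + 3)))
      atTop (𝓝 2) := by
  simp_rw [prod_range_sq_div_pred_mul_succ]
  have h : Tendsto (fun N : ℕ ↦ ((N : ℝ) + 1) / (N + 2)) atTop (𝓝 1) := by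
    have := (tendsto_natCast_div_add_atTop (1 : ℝ)).comp (tendsto_add_atTop_nat 1)
    convert this using 2 with N
    simp only [Function.comp_apply]
    push_cast
    ring
  simpa [mul_div_assoc] using h.const_mul 2

theorem factor_eq_div_wallisFactor_sq (k : ℕ) :
    (4 * ((k : ℝ) + 2) ^ 2 - 1) ^ 2 / (16 * ((k : ℝ) + 2) ^ 2 * (((k : ℝ) + 2) ^ 2 - 1)) =
      ((k : ℝ) + 2) ^ 2 / (((k : ℝ) + 1) * ((k : ℝ) + 3)) / wallisFactor (k + 1) ^ 2 := by
  have hk : (0 : ℝ) ≤ k := k.cast_nonneg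
  have h₁ : ((k : ℝ) + 2) ^ 2 - 1 ≠ 0 := by nlinarith
  have h₂ : 4 * ((k : ℝ) + 2) ^ 2 - 1 ≠ 0 := by nlinarith
  unfold wallisFactor
  push_cast
  field_simp
  ring

theorem one_le_factor (k : ℕ) :
    1 ≤ (4 * ((k : ℝ) + 2) ^ 2 - 1) ^ 2 / (16 * ((k : ℝ) + 2) ^ 2 * (((k : ℝ) + 2) ^ 2 - 1)) := by
  have hk : (0 : ℝ) ≤ k := k.cast_nonneg
  have h : (3 : ℝ) ≤ ((k : ℝ) + 2) ^ 2 - 1 := by nlinarith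
  rw [one_le_div (by positivity)]
  nlinarith

theorem stmt_12 :
    HasSum (fun k : ℕ =>
        Real.log ((4 * ((k : ℝ) + 2) ^ 2 - 1) ^ 2 / (16 * ((k : ℝ) + 2) ^ 2 * (((k : ℝ) + 2) ^ 2 - 1))))
      (Real.log (128 / (9 * π ^ 2))) := by
  refine hasSum_log_of_tendsto_prod one_le_factor ?_
  convert tendsto_prod_range_sq_div_pred_mul_succ.div
    (tendsto_prod_wallisFactor_succ.pow 2) (by positivity) using 1
  · ext N
    simp only [Pi.div_apply, factor_eq_div_wallisFactor_sq, prod_div_distrib, prod_pow]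
  · congr 1
    ring
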